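/- arXiv:1902.00747 — 3 statements merged into one kernel-verified Lean document; each statement's English description precedes it below -/
import Mathlib

section
/- Let n_1 ≥ n_2 ≥ ⋯ ≥ n_k ≥ 1 and q_1 ≥ q_2 ≥ ⋯ ≥ q_k ≥ 1 be two different k-tuples with k ≥ 3 and ∑_{i=1}^k n_i = ∑_{i=1}^k q_i. Then the complete k-partite graphs K_{n_1,…,n_k} and K_{q_1,…,q_k} are not switching equivalent. -/
open Polynomial Matrix Finset SimpleGraph

/- The Seidel matrix `S(G) = J - I - 2A(G)` of a simple graph `G`. -/
open scoped Classical in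
noncomputable def seidelMatrix {V : Type*} [Fintype V] [DecidableEq V]
    (G : SimpleGraph V) : Matrix V V ℝ :=
  (Matrix.of fun _ _ => (1 : ℝ)) - 1 - 2 • G.adjMatrix ℝ

/-- Two graphs on the same vertex set are switching equivalent iff their Seidel
matrices are conjugate by a diagonal `±1` matrix. -/
def SwitchingEquiv {V : Type*} [Fintype V] [DecidableEq V]
    (G H : SimpleGraph V) : Prop :=
  ∃ ε : V → ℝ, (∀ v, ε v = 1 ∨ ε v = -1) ∧
    seidelMatrix H = Matrix.diagonal ε * seidelMatrix G * Matrix.diagonal ε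

/-- A graph `G` is determined, up to switching, by its Seidel spectrum
(`S`-determined) if every graph with the same Seidel spectrum is switching
equivalent to a graph isomorphic to `G`. -/
def SDetermined {V : Type} [Fintype V] [DecidableEq V] (G : SimpleGraph V) : Prop :=
  ∀ (W : Type) [Fintype W] [DecidableEq W] (H : SimpleGraph W),
    (seidelMatrix H).charpoly = (seidelMatrix G).charpoly →
    ∃ H' : SimpleGraph W, SwitchingEquiv H H' ∧ Nonempty (H' ≃g G)

/-!
Conjugating by `diagonal ε` multiplies `S u v` by `ε u * ε v`, so the product of Seidel entries
around any triangle `u v w` (the two-graph of `G`) is a switching invariant, and it is also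
invariant under isomorphism. In a complete multipartite graph with at least three nonempty
parts, two distinct vertices lie in the same part iff no triangle through them has product `-1`.
Hence a switching followed by an isomorphism `K_n → K_q` maps parts onto parts, so `n` is a
permutation of `q`, and two antitone tuples that are permutations of each other coincide.
-/

section Seidel

variable {V W : Type*} [Fintype V] [DecidableEq V] [Fintype W] [DecidableEq W]

open scoped Classical in
lemma seidelMatrix_apply (G : SimpleGraph V) (u v : V) :
    seidelMatrix G u v = if u = v then 0 else if G.Adj u v then -1 else 1 := by
  simp only [seidelMatrix, Matrix.sub_apply, of_apply, one_apply, Matrix.smul_apply,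
    adjMatrix_apply]
  split_ifs with huv hadj hadj
  · exact absurd huv (G.ne_of_adj hadj)
  all_goals norm_num

lemma SimpleGraph.Iso.seidelMatrix_apply {G : SimpleGraph V} {G' : SimpleGraph W}
    (φ : G ≃g G') (u v : V) : seidelMatrix G' (φ u) (φ v) = seidelMatrix G u v := by
  rw [_root_.seidelMatrix_apply, _root_.seidelMatrix_apply]
  simp only [φ.injective.eq_iff]
  congr! 2
  exact φ.map_adj_iff

noncomputable def seidelTripleProduct (G : SimpleGraph V) (u v w : V) : ℝ :=
  seidelMatrix G u v * seidelMatrix G v w * seidelMatrix G w u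

lemma SwitchingEquiv.seidelTripleProduct_eq {G H : SimpleGraph V} (h : SwitchingEquiv G H)
    (u v w : V) :
    seidelTripleProduct H u v w = seidelTripleProduct G u v w := by
  obtain ⟨ε, hε, hS⟩ := h
  have hsq : ∀ v, ε v * ε v = 1 := fun v => by rcases hε v with h | h <;> simp [h]
  simp only [seidelTripleProduct, hS, mul_diagonal, diagonal_mul]
  linear_combination (seidelMatrix G u v * seidelMatrix G v w * seidelMatrix G w u) *
    (ε u * ε u * (ε v * ε v) * hsq w + ε u * ε u * hsq v + hsq u)

lemma SimpleGraph.Iso.seidelTripleProduct_apply {G : SimpleGraph V} {G' : SimpleGraph W}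
    (φ : G ≃g G') (u v w : V) :
    seidelTripleProduct G' (φ u) (φ v) (φ w) = seidelTripleProduct G u v w := by
  simp only [seidelTripleProduct, φ.seidelMatrix_apply]

end Seidel

lemma Equiv.exists_fiberwise_equiv_of_fst_eq_iff {ι κ : Type*} {α : ι → Type*}
    {β : κ → Type*}
    [∀ i, Nonempty (α i)] [∀ j, Nonempty (β j)] (e : (Σ i, α i) ≃ Σ j, β j)
    (he : ∀ u v, u.1 = v.1 ↔ (e u).1 = (e v).1) :
    ∃ σ : ι ≃ κ, ∀ i, Nonempty (α i ≃ β (σ i)) := by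
  let σ : ι ≃ κ :=
    { toFun i := (e ⟨i, Classical.arbitrary _⟩).1
      invFun j := (e.symm ⟨j, Classical.arbitrary _⟩).1
      left_inv i := (he _ ⟨i, Classical.arbitrary _⟩).mpr (by simp)
      right_inv j :=
        ((he ⟨_, Classical.arbitrary _⟩ (e.symm ⟨j, Classical.arbitrary _⟩)).mp rfl).trans
          (by simp) }
  exact ⟨σ, fun i => ⟨(Equiv.sigmaSubtype i).symm.trans
    ((e.subtypeEquiv fun u => he u ⟨i, _⟩).trans (Equiv.sigmaSubtype (σ i)))⟩⟩

section CompleteMultipartite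

variable {ι : Type*} [Fintype ι] [DecidableEq ι] {α : ι → Type*} [∀ i, Fintype (α i)]
  [∀ i, DecidableEq (α i)]

lemma seidelMatrix_completeMultipartiteGraph_apply (u v : Σ i, α i) :
    seidelMatrix (completeMultipartiteGraph α) u v =
      if u = v then 0 else if u.1 = v.1 then 1 else -1 := by
  rw [seidelMatrix_apply]
  by_cases h : u.1 = v.1 <;> simp [h]

lemma seidelTripleProduct_completeMultipartiteGraph_ne_neg_one_iff
    [∀ i, Nonempty (α i)] (hι : 3 ≤ Fintype.card ι) {u v : Σ i, α i} (huv : u ≠ v) :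
    (∀ w, seidelTripleProduct (completeMultipartiteGraph α) u v w ≠ -1) ↔ u.1 = v.1 := by
  simp only [seidelTripleProduct, seidelMatrix_completeMultipartiteGraph_apply, if_neg huv]
  constructor
  · intro h
    by_contra hne
    obtain ⟨j, hju, hjv⟩ := ENat.exists_ne_ne_of_three_le (by simpa using hι) u.1 v.1
    set w : Σ i, α i := ⟨j, Classical.arbitrary _⟩
    have hvw : v ≠ w := fun h => hjv (congrArg Sigma.fst h).symm
    have hwu : w ≠ u := fun h => hju (congrArg Sigma.fst h)
    refine h w ?_
    rw [if_neg hne, if_neg hvw, if_neg (Ne.symm hjv), if_neg hwu, if_neg hju]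
    norm_num
  · intro h w
    rw [if_pos h]
    split_ifs <;> norm_num <;> simp_all

variable {κ : Type*} [Fintype κ] [DecidableEq κ] {β : κ → Type*} [∀ j, Fintype (β j)]
  [∀ j, DecidableEq (β j)]

lemma fst_eq_iff_fst_eq_of_seidelTripleProduct_eq [∀ i, Nonempty (α i)] [∀ j, Nonempty (β j)]
    (hι : 3 ≤ Fintype.card ι) (hκ : 3 ≤ Fintype.card κ) (e : (Σ i, α i) ≃ Σ j, β j)
    (he : ∀ u v w, seidelTripleProduct (completeMultipartiteGraph β) (e u) (e v) (e w) =
      seidelTripleProduct (completeMultipartiteGraph α) u v w)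
    (u v : Σ i, α i) : u.1 = v.1 ↔ (e u).1 = (e v).1 := by
  rcases eq_or_ne u v with rfl | huv
  · simp
  rw [← seidelTripleProduct_completeMultipartiteGraph_ne_neg_one_iff hι huv,
    ← seidelTripleProduct_completeMultipartiteGraph_ne_neg_one_iff hκ (e.injective.ne huv),
    e.symm.forall_congr_left]
  simp only [Equiv.symm_symm, he]

end CompleteMultipartite

theorem multipartite_not_switchingEquiv_general (k : ℕ) (hk : 3 ≤ k) (n q : Fin k → ℕ)
    (hn1 : ∀ i, 1 ≤ n i) (hq1 : ∀ i, 1 ≤ q i)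
    (hna : Antitone n) (hqa : Antitone q) (hne : n ≠ q) :
    ¬ ∃ H : SimpleGraph ((i : Fin k) × Fin (n i)),
        SwitchingEquiv (completeMultipartiteGraph fun i => Fin (n i)) H ∧
        Nonempty (H ≃g completeMultipartiteGraph fun i => Fin (q i)) := by
  rintro ⟨H, hsw, ⟨φ⟩⟩
  have : ∀ i, Nonempty (Fin (n i)) := fun i => ⟨⟨0, hn1 i⟩⟩
  have : ∀ i, Nonempty (Fin (q i)) := fun i => ⟨⟨0, hq1 i⟩⟩
  have hparts : ∀ u v, u.1 = v.1 ↔ (φ u).1 = (φ v).1 :=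
    fst_eq_iff_fst_eq_of_seidelTripleProduct_eq (by simpa) (by simpa) φ.toEquiv
      fun u v w => (φ.seidelTripleProduct_apply u v w).trans (hsw.seidelTripleProduct_eq u v w)
  obtain ⟨σ, hσ⟩ := φ.toEquiv.exists_fiberwise_equiv_of_fst_eq_iff hparts
  have hnq : n = q ∘ σ := funext fun i => by simpa using Fintype.card_congr (hσ i).some
  exact hne (hnq.trans (Tuple.unique_antitone (σ := σ) (τ := 1) (hnq ▸ hna) hqa))

/-- **Theorem.** If `n_1 ≥ ⋯ ≥ n_k ≥ 1` and `q_1 ≥ ⋯ ≥ q_k ≥ 1` are two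
different `k`-tuples, `k ≥ 3`, with `∑ n_i = ∑ q_i`, then `K_{n_1,…,n_k}` and
`K_{q_1,…,q_k}` are not switching equivalent (no graph on the vertex set of the
first is both switching equivalent to it and isomorphic to the second). -/
theorem multipartite_not_switchingEquiv (k : ℕ) (hk : 3 ≤ k) (n q : Fin k → ℕ)
    (hn1 : ∀ i, 1 ≤ n i) (hq1 : ∀ i, 1 ≤ q i)
    (hna : Antitone n) (hqa : Antitone q) (hne : n ≠ q)
    (hsum : ∑ i, n i = ∑ i, q i) :
    ¬ ∃ H : SimpleGraph ((i : Fin k) × Fin (n i)),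
        SwitchingEquiv (completeMultipartiteGraph fun i => Fin (n i)) H ∧
        Nonempty (H ≃g completeMultipartiteGraph fun i => Fin (q i)) :=
  multipartite_not_switchingEquiv_general k hk n q hn1 hq1 hna hqa hne
end

section
/- Let K_{n_1,…,n_k} be a complete k-partite graph of order n = n_1 + ⋯ + n_k with 2 < k < n (all n_i ≥ 1). Then K_{n_1,…,n_k} has exactly two distinct negative Seidel eigenvalues: −1, with multiplicity exactly n − k, and one further simple eigenvalue λ_n < −1. -/
/-!
Write `S = R M Rᵀ - I`, where `R` is the vertex–part incidence matrix and `M = 2I - J` is `k × k`.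
Moving `R` across the product gives `χ_S = (X + 1)^(n - k) χ_Q` for the `k × k` quotient matrix
`Q = M diag(n_i) - I`, and the matrix determinant lemma gives
`χ_Q(x) = ∏ (x - c_i) · g(x)` with `c_i = 2 n_i - 1 ≥ 1` and the secular function
`g(x) = 1 + ∑ n_i / (x - c_i)`. On `(-∞, 0)` the function `g` decreases strictly from `1` (its
limit at `-∞`), and `g(-1) = 1 - k/2 < 0`, so `χ_Q` has exactly one negative root, it lies below
`-1`, and it is simple because `g' < 0` there.
-/

open Polynomial Matrix Finset SimpleGraph

open Filter Topology Set

lemma det_diagonal_add_vecMulVec {n α : Type*} [Fintype n] [DecidableEq n] [Field α]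
    {d : n → α} (hd : ∀ i, d i ≠ 0) (u v : n → α) :
    (diagonal d + vecMulVec u v).det = (∏ i, d i) * (1 + ∑ i, v i * u i / d i) := by
  have hfactor :
      diagonal d + vecMulVec u v = diagonal d * (1 + vecMulVec (fun i => u i / d i) v) := by
    ext i j
    rcases eq_or_ne i j with rfl | h <;> simp [vecMulVec_apply, *, mul_add] <;> field_simp [hd i]
  rw [hfactor, det_mul, det_diagonal, vecMulVec_eq Unit, det_one_add_replicateCol_mul_replicateRow]
  simp [dotProduct, mul_div_assoc]

section Secular

variable {ι : Type*} [Fintype ι] (c w : ι → ℝ)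

noncomputable def secularFun (x : ℝ) : ℝ := 1 + ∑ i, w i / (x - c i)

variable {c w}

lemma hasDerivAt_secularFun {x : ℝ} (hx : ∀ i, x ≠ c i) :
    HasDerivAt (secularFun c w) (-∑ i, w i / (x - c i) ^ 2) x := by
  have hterm (i : ι) : HasDerivAt (fun y => w i / (y - c i)) (-(w i / (x - c i) ^ 2)) x := by
    simpa [div_eq_mul_inv, neg_div] using
      (((hasDerivAt_id x).sub_const (c i)).inv (sub_ne_zero.2 (hx i))).const_mul (w i)
  unfold secularFun
  simpa using (HasDerivAt.sum (u := univ) fun i _ => hterm i).const_add 1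

lemma exists_hasDerivAt_secularFun_neg [Nonempty ι] (hw : ∀ i, 0 < w i) {x : ℝ}
    (hx : ∀ i, x ≠ c i) : ∃ d < 0, HasDerivAt (secularFun c w) d x :=
  ⟨_, neg_lt_zero.2 <| sum_pos
    (fun i _ => div_pos (hw i) (sq_pos_of_ne_zero (sub_ne_zero.2 (hx i)))) univ_nonempty,
    hasDerivAt_secularFun hx⟩

lemma tendsto_secularFun_atBot : Tendsto (secularFun c w) atBot (𝓝 1) := by
  have hterm (i : ι) : Tendsto (fun x => w i / (x - c i)) atBot (𝓝 0) :=
    tendsto_const_nhds.div_atBot (tendsto_atBot_add_const_right _ _ tendsto_id)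
  unfold secularFun
  simpa using (tendsto_finsetSum univ fun i _ => hterm i).const_add 1

lemma strictAntiOn_secularFun [Nonempty ι] {b : ℝ} (hw : ∀ i, 0 < w i) (hb : ∀ i, b ≤ c i) :
    StrictAntiOn (secularFun c w) (Iio b) := by
  have hne {x : ℝ} (hx : x < b) (i : ι) : x ≠ c i := (hx.trans_le (hb i)).ne
  refine strictAntiOn_of_deriv_neg (convex_Iio b)
    (fun x hx => (hasDerivAt_secularFun (hne hx)).continuousAt.continuousWithinAt) fun x hx => ?_
  rw [interior_Iio] at hx
  obtain ⟨d, hd, hderiv⟩ := exists_hasDerivAt_secularFun_neg hw (hne hx)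
  rwa [hderiv.deriv]

lemma exists_lt_secularFun_eq_zero {a b : ℝ} (hb : ∀ i, b ≤ c i) (hab : a < b)
    (ha : secularFun c w a < 0) : ∃ μ < a, secularFun c w μ = 0 := by
  obtain ⟨x₀, hx₀a, hx₀⟩ := ((eventually_lt_atBot a).and
    ((tendsto_order.1 (tendsto_secularFun_atBot (c := c) (w := w))).1 0 one_pos)).exists
  have hcont : ContinuousOn (secularFun c w) (Icc x₀ a) := fun x hx =>
    (hasDerivAt_secularFun fun i =>
      (hx.2.trans_lt (hab.trans_le (hb i))).ne).continuousAt.continuousWithinAt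
  obtain ⟨μ, ⟨-, hμa⟩, hμ⟩ := intermediate_value_Ioo' hx₀a.le hcont ⟨ha, hx₀⟩
  exact ⟨μ, hμa, hμ⟩

lemma rootMultiplicity_eq_one_of_secularFun_eq_zero [Nonempty ι] {q : ℝ[X]} {μ : ℝ}
    (hq : ∀ᶠ x in 𝓝 μ, q.eval x = (∏ i, (x - c i)) * secularFun c w x)
    (hw : ∀ i, 0 < w i) (hμc : ∀ i, μ ≠ c i) (hμ : secularFun c w μ = 0) :
    q.rootMultiplicity μ = 1 := by
  set P : ℝ[X] := ∏ i, (X - C (c i))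
  have hP (x : ℝ) : P.eval x = ∏ i, (x - c i) := by simp [P, eval_prod]
  obtain ⟨d, hd, hderiv⟩ := exists_hasDerivAt_secularFun_neg hw hμc
  have hq' : q.derivative.eval μ = P.eval μ * d := by
    have hPg := (P.hasDerivAt μ).mul hderiv
    rw [hμ, mul_zero, zero_add] at hPg
    exact (q.hasDerivAt μ).unique
      (hPg.congr_of_eventuallyEq (hq.mono fun x hx => by simp only [Pi.mul_apply, hx, hP]))
  have hq'μ : q.derivative.eval μ ≠ 0 := by
    rw [hq', hP]
    exact mul_ne_zero (prod_ne_zero_iff.2 fun i _ => sub_ne_zero.2 (hμc i)) hd.ne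
  have hq0 : q ≠ 0 := by rintro rfl; simp at hq'μ
  have hroot : q.IsRoot μ := by rw [IsRoot, hq.self_of_nhds, hμ, mul_zero]
  have hpos := (rootMultiplicity_pos hq0).2 hroot
  have hle := (one_lt_rootMultiplicity_iff_isRoot hq0).not.2 fun h => hq'μ h.2
  omega

lemma filter_roots_lt_eq_singleton [Nonempty ι] {q : ℝ[X]} {b μ : ℝ}
    (hq : ∀ x < b, q.eval x = (∏ i, (x - c i)) * secularFun c w x)
    (hw : ∀ i, 0 < w i) (hb : ∀ i, b ≤ c i) (hμb : μ < b) (hμ : secularFun c w μ = 0) :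
    q.roots.filter (· < b) = {μ} := by
  have hne {x : ℝ} (hx : x < b) (i : ι) : x ≠ c i := (hx.trans_le (hb i)).ne
  have hmult : q.rootMultiplicity μ = 1 :=
    rootMultiplicity_eq_one_of_secularFun_eq_zero (eventually_of_mem (Iio_mem_nhds hμb) hq) hw
      (hne hμb) hμ
  have hq0 : q ≠ 0 := by rintro rfl; simp at hmult
  have hall : ∀ x ∈ q.roots.filter (· < b), x = μ := by
    intro x hx
    obtain ⟨hxq, hxb⟩ := Multiset.mem_filter.1 hx
    have hgx : secularFun c w x = 0 := by
      have hroot := (mem_roots hq0).1 hxq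
      rw [IsRoot, hq x hxb] at hroot
      exact (mul_eq_zero.1 hroot).resolve_left
        (prod_ne_zero_iff.2 fun i _ => sub_ne_zero.2 (hne hxb i))
    exact (strictAntiOn_secularFun hw hb).injOn hxb hμb (hgx.trans hμ.symm)
  rw [Multiset.eq_replicate_card.2 hall, ← Multiset.count_eq_card.2 fun x hx => (hall x hx).symm,
    Multiset.count_filter_of_pos (p := (· < b)) hμb, count_roots, hmult, Multiset.replicate_one]

lemma secularFun_neg_one (m : ι → ℝ) (hm : ∀ i, m i ≠ 0) :
    secularFun (fun i => 2 * m i - 1) m (-1) = 1 - Fintype.card ι / 2 := by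
  have hterm (i : ι) : m i / (-1 - (2 * m i - 1)) = -(1 / 2) := by
    rw [div_eq_iff fun h => hm i (by linarith)]
    ring
  simp only [secularFun, hterm, sum_const, card_univ, nsmul_eq_mul]
  ring

end Secular

section CompleteMultipartite

variable {ι : Type*} [Fintype ι] [DecidableEq ι]

/- The quotient matrix of `S(K_{m_1,…,m_k})` for its partition into parts: entry `(i, j)` is the
sum of the Seidel entries from a vertex of part `i` to the vertices of part `j`. -/
noncomputable def seidelQuotientMatrix (m : ι → ℝ) : Matrix ι ι ℝ :=
  of fun i j => if i = j then m j - 1 else -m j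

lemma scalar_sub_seidelQuotientMatrix (m : ι → ℝ) (x : ℝ) :
    scalar ι x - seidelQuotientMatrix m =
      diagonal (fun i => x - (2 * m i - 1)) + vecMulVec 1 m := by
  ext i j
  by_cases h : i = j <;> simp [seidelQuotientMatrix, h]; ring

lemma eval_charpoly_seidelQuotientMatrix (m : ι → ℝ) {x : ℝ} (hx : ∀ i, x ≠ 2 * m i - 1) :
    (seidelQuotientMatrix m).charpoly.eval x =
      (∏ i, (x - (2 * m i - 1))) * secularFun (fun i => 2 * m i - 1) m x := by
  rw [eval_charpoly, scalar_sub_seidelQuotientMatrix,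
    det_diagonal_add_vecMulVec fun i => sub_ne_zero.2 (hx i)]
  simp [secularFun]

variable (V : ι → Type*)

def partIncidenceMatrix : Matrix (Σ i, V i) ι ℝ := of fun p i => if p.1 = i then 1 else 0

lemma partIncidenceMatrix_mul_mul_transpose_partIncidenceMatrix (M : Matrix ι ι ℝ) :
    partIncidenceMatrix V * M * (partIncidenceMatrix V)ᵀ = of fun p q => M p.1 q.1 := by
  ext p q
  simp [partIncidenceMatrix, mul_apply]

lemma transpose_partIncidenceMatrix_mul_partIncidenceMatrix [∀ i, Fintype (V i)] :
    (partIncidenceMatrix V)ᵀ * partIncidenceMatrix V =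
      diagonal fun i => (Fintype.card (V i) : ℝ) := by
  ext i j
  by_cases h : i = j <;> simp [partIncidenceMatrix, mul_apply, Fintype.sum_sigma, h, eq_comm]

variable [∀ i, Fintype (V i)] [∀ i, DecidableEq (V i)]

lemma seidelMatrix_completeMultipartiteGraph :
    seidelMatrix (completeMultipartiteGraph V) =
      partIncidenceMatrix V * (of fun i j : ι => if i = j then (1 : ℝ) else -1) *
        (partIncidenceMatrix V)ᵀ - 1 := by
  rw [partIncidenceMatrix_mul_mul_transpose_partIncidenceMatrix]
  ext p q
  simp only [seidelMatrix, Matrix.sub_apply, Matrix.smul_apply, of_apply, adjMatrix_apply,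
    comap_adj, top_adj]
  by_cases h : p.1 = q.1
  · by_cases hpq : p = q
    · subst hpq; simp
    · simp [h, hpq]
  · simp [h]
    ring

lemma charpoly_seidelMatrix_completeMultipartiteGraph
    (h : Fintype.card ι ≤ Fintype.card (Σ i, V i)) :
    (seidelMatrix (completeMultipartiteGraph V)).charpoly =
      (X + C 1) ^ (Fintype.card (Σ i, V i) - Fintype.card ι) *
        (seidelQuotientMatrix fun i => (Fintype.card (V i) : ℝ)).charpoly := by
  set M : Matrix ι ι ℝ := of fun i j => if i = j then 1 else -1
  have hQ : M * ((partIncidenceMatrix V)ᵀ * partIncidenceMatrix V) - scalar ι 1 =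
      seidelQuotientMatrix fun i => (Fintype.card (V i) : ℝ) := by
    rw [transpose_partIncidenceMatrix_mul_partIncidenceMatrix]
    ext i j
    by_cases h : i = j <;> simp [M, seidelQuotientMatrix, h]
  rw [seidelMatrix_completeMultipartiteGraph, ← map_one (scalar _), charpoly_sub_scalar,
    Matrix.mul_assoc, charpoly_mul_comm_of_le _ _ h, ← hQ, charpoly_sub_scalar, ← Matrix.mul_assoc]
  simp [M, mul_comp]

end CompleteMultipartite

open scoped Classical in
theorem negative_seidel_eigenvalues_general (k : ℕ) (n : Fin k → ℕ) (hn : ∀ i, 1 ≤ n i)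
    (hk : 2 < k)
    (hS : (seidelMatrix (completeMultipartiteGraph fun i => Fin (n i))).IsHermitian) :
    ∃ μ : ℝ, μ < -1 ∧
      Multiset.filter (fun x => x < 0) (Finset.univ.val.map hS.eigenvalues) =
        Multiset.replicate ((∑ i, n i) - k) (-1) + {μ} := by
  have : Nonempty (Fin k) := ⟨⟨0, by omega⟩⟩
  set c : Fin k → ℝ := fun i => 2 * (n i : ℝ) - 1
  have hn' (i : Fin k) : (1 : ℝ) ≤ n i := by exact_mod_cast hn i
  have hc (i : Fin k) : (0 : ℝ) ≤ c i := by linarith [hn' i]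
  have hg : secularFun c (fun i => (n i : ℝ)) (-1) < 0 := by
    have hk' : (2 : ℝ) < k := by exact_mod_cast hk
    rw [secularFun_neg_one _ fun i => by linarith [hn' i], Fintype.card_fin]
    linarith
  obtain ⟨μ, hμ, hgμ⟩ := exists_lt_secularFun_eq_zero hc (by norm_num : (-1 : ℝ) < 0) hg
  refine ⟨μ, hμ, ?_⟩
  have hchar := charpoly_seidelMatrix_completeMultipartiteGraph (fun i => Fin (n i))
    (by simpa using Finset.sum_le_sum (s := univ) fun i _ => hn i)
  simp only [Fintype.card_sigma, Fintype.card_fin] at hchar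
  have hq (x : ℝ) (hx : x < 0) := eval_charpoly_seidelQuotientMatrix (fun i => (n i : ℝ))
    fun i => (hx.trans_le (hc i)).ne
  have hne : (X + C 1) ^ (∑ i, n i - k) * (seidelQuotientMatrix fun i => (n i : ℝ)).charpoly ≠ 0 :=
    hchar ▸ (charpoly_monic _).ne_zero
  have hroots := hS.roots_charpoly_eq_eigenvalues
  simp only [RCLike.ofReal_real_eq_id, Function.id_comp] at hroots
  rw [← hroots, hchar, roots_mul hne, roots_pow, roots_X_add_C, Multiset.filter_add,
    filter_roots_lt_eq_singleton hq (fun i => by linarith [hn' i]) hc (hμ.trans (by norm_num))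
      hgμ,
    Multiset.nsmul_singleton, Multiset.filter_eq_self.2 fun x hx => ?_]
  rw [Multiset.eq_of_mem_replicate hx]
  norm_num

open scoped Classical in
/-- **Remark.** If `2 < k < n = ∑ i, n i`, then the complete `k`-partite graph
`K_{n_1,…,n_k}` has exactly two distinct negative Seidel eigenvalues: `-1` with
multiplicity exactly `n - k`, and one further simple eigenvalue `μ < -1`
(the multiset of negative eigenvalues is `(n - k) • {-1} + {μ}`). -/
theorem negative_seidel_eigenvalues (k : ℕ) (n : Fin k → ℕ) (hn : ∀ i, 1 ≤ n i)
    (hk : 2 < k) (hkn : k < ∑ i, n i)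
    (hS : (seidelMatrix (completeMultipartiteGraph fun i => Fin (n i))).IsHermitian) :
    ∃ μ : ℝ, μ < -1 ∧
      Multiset.filter (fun x => x < 0) (Finset.univ.val.map hS.eigenvalues) =
        Multiset.replicate ((∑ i, n i) - k) (-1) + {μ} :=
  negative_seidel_eigenvalues_general k n hn hk hS
end

section
/- Let n_1,…,n_k be real numbers (k ≥ 1) and let B be the k×k matrix with diagonal entries B_{ii} = n_i − 1 and off-diagonal entries B_{ij} = −n_j for i ≠ j (the quotient matrix of the Seidel matrix of K_{n_1,…,n_k} with respect to the partition into parts). Then det(λI − B) = ∏_{i=1}^{k} (λ + 1 − 2n_i) + ∑_{i=1}^{k} n_i ∏_{j≠i} (λ + 1 − 2n_j). -/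
open Polynomial Matrix Finset

/-! The characteristic matrix `λI - B` is the diagonal matrix with entries `λ + 1 - 2 nᵢ` plus
the rank-one matrix whose every row is `(n₁, …, n_k)`. By the matrix determinant lemma
`det (A + u vᵀ) = det A + vᵀ (adj A) u`, with `A` diagonal so that `adj A` is diagonal with
entries `∏_{j ≠ i} (λ + 1 - 2 n_j)`, the formula follows. Over `ℝ[λ]` the diagonal part has
nonzero but non-unit determinant, so the determinant lemma, proved for invertible `A`, is
extended to `det A ≠ 0` over a domain by passing to the fraction field. -/

namespace Matrix

variable {m R : Type*} [Fintype m] [DecidableEq m]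

theorem det_add_vecMulVec_of_isUnit [CommRing R] {A : Matrix m m R} (hA : IsUnit A.det)
    (u v : m → R) : (A + vecMulVec u v).det = A.det + v ⬝ᵥ (A.adjugate *ᵥ u) := by
  rw [vecMulVec_eq Unit, det_add_replicateCol_mul_replicateRow hA, inv_def,
    Matrix.mul_assoc, ← replicateCol_mulVec, replicateRow_mul_replicateCol,
    det_unique (n := Unit)]
  simp only [add_apply, one_apply_eq, of_apply, smul_mulVec, dotProduct_smul, smul_eq_mul]
  rw [mul_add, mul_one, ← mul_assoc, Ring.mul_inverse_cancel _ hA, one_mul]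

theorem det_add_vecMulVec [CommRing R] [IsDomain R] {A : Matrix m m R} (hA : A.det ≠ 0)
    (u v : m → R) : (A + vecMulVec u v).det = A.det + v ⬝ᵥ (A.adjugate *ᵥ u) := by
  let f := algebraMap R (FractionRing R)
  have hf : Function.Injective f := IsFractionRing.injective R (FractionRing R)
  have hfA : IsUnit (f.mapMatrix A).det := by
    rw [← RingHom.map_det, isUnit_iff_ne_zero]
    exact (map_ne_zero_iff f hf).2 hA
  have hvec : f.mapMatrix (vecMulVec u v) = vecMulVec (f ∘ u) (f ∘ v) := by
    ext i j
    simp [vecMulVec_apply]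
  have hadj : f ∘ (A.adjugate *ᵥ u) = f.mapMatrix A.adjugate *ᵥ (f ∘ u) :=
    funext (RingHom.map_mulVec f _ u)
  apply hf
  rw [RingHom.map_det, map_add, hvec, det_add_vecMulVec_of_isUnit hfA, map_add,
    RingHom.map_dotProduct, hadj, RingHom.map_adjugate, RingHom.map_det]

theorem det_diagonal_add_vecMulVec [CommRing R] [IsDomain R] {d : m → R} (hd : ∀ i, d i ≠ 0)
    (u v : m → R) :
    (diagonal d + vecMulVec u v).det =
      ∏ i, d i + ∑ i, v i * u i * ∏ j ∈ univ.erase i, d j := by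
  have hdet : (diagonal d).det ≠ 0 := by
    rw [det_diagonal]
    exact prod_ne_zero_iff.2 fun i _ => hd i
  rw [det_add_vecMulVec hdet, det_diagonal, adjugate_diagonal, dotProduct]
  simp only [mulVec_diagonal, mul_comm (u _), mul_assoc]

end Matrix

theorem charpoly_quotient_matrix_general (k : ℕ) (n : Fin k → ℝ) :
    (Matrix.of fun i j : Fin k => if i = j then n i - 1 else -(n j)).charpoly =
      (∏ i, (X + 1 - C (2 * n i))) +
        ∑ i, C (n i) * ∏ j ∈ Finset.univ.erase i, (X + 1 - C (2 * n j)) := by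
  have hsplit : (Matrix.of fun i j : Fin k => if i = j then n i - 1 else -(n j)).charmatrix =
      diagonal (fun i => X + 1 - C (2 * n i)) + vecMulVec 1 (fun j => C (n j)) := by
    ext i j : 1
    rcases eq_or_ne i j with rfl | hij
    · simp only [charmatrix_apply_eq, of_apply, if_pos, Matrix.add_apply, diagonal_apply_eq,
        vecMulVec_apply, Pi.one_apply, one_mul, C_sub, C_mul, C_1, C_ofNat]
      ring
    · simp [hij]
  have hd : ∀ i, (X + 1 - C (2 * n i) : ℝ[X]) ≠ 0 := fun i => by
    rw [add_sub_assoc, ← C_1, ← C_sub]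
    exact X_add_C_ne_zero _
  rw [charpoly, hsplit, det_diagonal_add_vecMulVec hd]
  simp only [Pi.one_apply, mul_one]

/-- The quotient matrix `B` of the Seidel matrix of `K_{n_1,…,n_k}` with respect
to the partition into its parts: `B i i = n i - 1` and `B i j = -(n j)` for
`i ≠ j`. Its characteristic polynomial is
`∏_i (λ + 1 - 2 n_i) + ∑_i n_i ∏_{j ≠ i} (λ + 1 - 2 n_j)`. -/
theorem charpoly_quotient_matrix (k : ℕ) (hk : 1 ≤ k) (n : Fin k → ℝ) :
    (Matrix.of fun i j : Fin k => if i = j then n i - 1 else -(n j)).charpoly =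
      (∏ i, (X + 1 - C (2 * n i))) +
        ∑ i, C (n i) * ∏ j ∈ Finset.univ.erase i, (X + 1 - C (2 * n j)) :=
  charpoly_quotient_matrix_general k n
end
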